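/- For i, j, k ∈ {+1, −1}, define Π↑↑_{[i,j,k]} := (1/32)( 4 I⊗I + √3[ i(X⊗I + I⊗X) + j(Y⊗I + I⊗Y) + k(Z⊗I + I⊗Z) ] + ij(X⊗Y + Y⊗X) + jk(Y⊗Z + Z⊗Y) + ki(Z⊗X + X⊗Z) ). Then: (1) each Π↑↑_{[i,j,k]} is positive semidefinite; (2) Σ_{i,j,k∈{±1}} Π↑↑_{[i,j,k]} = I⊗I; and (3) for every m ∈ ℝ³ with ‖m‖ ≤ 1, the marginals on two parallel copies reproduce the unsharp spin statistics with sharpness √3/2: Σ_{j,k} Tr[Π↑↑_{[i,j,k]} (ρ_m⊗ρ_m)] = (1/2)(1 + (√3/2)·i·m_x) for each i ∈ {±1}, Σ_{i,k} Tr[Π↑↑_{[i,j,k]} (ρ_m⊗ρ_m)] = (1/2)(1 + (√3/2)·j·m_y) for each j ∈ {±1}, and Σ_{i,j} Tr[Π↑↑_{[i,j,k]} (ρ_m⊗ρ_m)] = (1/2)(1 + (√3/2)·k·m_z) for each k ∈ {±1}. -/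

import Mathlib

open Matrix Complex
open scoped Kronecker Matrix ComplexOrder

noncomputable section

/-- Pauli matrix σ_x. -/
def σx : Matrix (Fin 2) (Fin 2) ℂ := !![0, 1; 1, 0]
/-- Pauli matrix σ_y. -/
def σy : Matrix (Fin 2) (Fin 2) ℂ := !![0, -Complex.I; Complex.I, 0]
/-- Pauli matrix σ_z. -/
def σz : Matrix (Fin 2) (Fin 2) ℂ := !![1, 0; 0, -1]

/-- The two-element set {+1, -1} of outcomes/signs. -/
def pm : Finset ℝ := {1, -1}

/-- Qubit state with Bloch vector m: ρ_m = (1/2)(I + m·σ). -/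
def rho (m : Fin 3 → ℝ) : Matrix (Fin 2) (Fin 2) ℂ :=
  (2 : ℂ)⁻¹ • ((1 : Matrix (Fin 2) (Fin 2) ℂ) + (m 0 : ℂ) • σx + (m 1 : ℂ) • σy + (m 2 : ℂ) • σz)

/-- The antiparallel-configuration effects Π↑↓_{[i,j,k]}. -/
def PiAnti (i j k : ℝ) : Matrix (Fin 2 × Fin 2) (Fin 2 × Fin 2) ℂ :=
  (16 : ℂ)⁻¹ • ((2 : ℂ) • (1 : Matrix (Fin 2 × Fin 2) (Fin 2 × Fin 2) ℂ)
    + (i : ℂ) • (σx ⊗ₖ (1 : Matrix (Fin 2) (Fin 2) ℂ) - (1 : Matrix (Fin 2) (Fin 2) ℂ) ⊗ₖ σx)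
    + (j : ℂ) • (σy ⊗ₖ (1 : Matrix (Fin 2) (Fin 2) ℂ) - (1 : Matrix (Fin 2) (Fin 2) ℂ) ⊗ₖ σy)
    + (k : ℂ) • (σz ⊗ₖ (1 : Matrix (Fin 2) (Fin 2) ℂ) - (1 : Matrix (Fin 2) (Fin 2) ℂ) ⊗ₖ σz)
    - ((i * j : ℝ) : ℂ) • (σx ⊗ₖ σy + σy ⊗ₖ σx)
    - ((j * k : ℝ) : ℂ) • (σy ⊗ₖ σz + σz ⊗ₖ σy)
    - ((k * i : ℝ) : ℂ) • (σz ⊗ₖ σx + σx ⊗ₖ σz))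

/-- The GPT effects Π#_{[i,j,k]}. -/
def PiSharp (i j k : ℝ) : Matrix (Fin 2 × Fin 2) (Fin 2 × Fin 2) ℂ :=
  (16 : ℂ)⁻¹ • ((2 : ℂ) • (1 : Matrix (Fin 2 × Fin 2) (Fin 2 × Fin 2) ℂ)
    + (i : ℂ) • (σx ⊗ₖ (1 : Matrix (Fin 2) (Fin 2) ℂ) + (1 : Matrix (Fin 2) (Fin 2) ℂ) ⊗ₖ σx)
    + (j : ℂ) • (σy ⊗ₖ (1 : Matrix (Fin 2) (Fin 2) ℂ) + (1 : Matrix (Fin 2) (Fin 2) ℂ) ⊗ₖ σy)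
    + (k : ℂ) • (σz ⊗ₖ (1 : Matrix (Fin 2) (Fin 2) ℂ) + (1 : Matrix (Fin 2) (Fin 2) ℂ) ⊗ₖ σz)
    + ((i * j : ℝ) : ℂ) • (σx ⊗ₖ σy + σy ⊗ₖ σx)
    + ((j * k : ℝ) : ℂ) • (σy ⊗ₖ σz + σz ⊗ₖ σy)
    + ((k * i : ℝ) : ℂ) • (σz ⊗ₖ σx + σx ⊗ₖ σz))

end

noncomputable section

/-- The parallel-configuration effects Π↑↑_{[i,j,k]} of Carmeli et al. -/
def PiPar (i j k : ℝ) : Matrix (Fin 2 × Fin 2) (Fin 2 × Fin 2) ℂ :=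
  (32 : ℂ)⁻¹ • ((4 : ℂ) • (1 : Matrix (Fin 2 × Fin 2) (Fin 2 × Fin 2) ℂ)
    + ((Real.sqrt 3 * i : ℝ) : ℂ) • (σx ⊗ₖ (1 : Matrix (Fin 2) (Fin 2) ℂ) + (1 : Matrix (Fin 2) (Fin 2) ℂ) ⊗ₖ σx)
    + ((Real.sqrt 3 * j : ℝ) : ℂ) • (σy ⊗ₖ (1 : Matrix (Fin 2) (Fin 2) ℂ) + (1 : Matrix (Fin 2) (Fin 2) ℂ) ⊗ₖ σy)
    + ((Real.sqrt 3 * k : ℝ) : ℂ) • (σz ⊗ₖ (1 : Matrix (Fin 2) (Fin 2) ℂ) + (1 : Matrix (Fin 2) (Fin 2) ℂ) ⊗ₖ σz)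
    + ((i * j : ℝ) : ℂ) • (σx ⊗ₖ σy + σy ⊗ₖ σx)
    + ((j * k : ℝ) : ℂ) • (σy ⊗ₖ σz + σz ⊗ₖ σy)
    + ((k * i : ℝ) : ℂ) • (σz ⊗ₖ σx + σx ⊗ₖ σz))

/-- The universal spin-flip (transformation) map F(A) = (Tr A)·I − A. -/
def Flip (A : Matrix (Fin 2) (Fin 2) ℂ) : Matrix (Fin 2) (Fin 2) ℂ :=
  A.trace • (1 : Matrix (Fin 2) (Fin 2) ℂ) - A

/-- The map id ⊗ Φ on M₂(ℂ) ⊗ M₂(ℂ), acting as A ⊗ B ↦ A ⊗ Φ(B) extended linearly. -/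
def idTensor (Φ : Matrix (Fin 2) (Fin 2) ℂ → Matrix (Fin 2) (Fin 2) ℂ)
    (M : Matrix (Fin 2 × Fin 2) (Fin 2 × Fin 2) ℂ) : Matrix (Fin 2 × Fin 2) (Fin 2 × Fin 2) ℂ :=
  Matrix.of fun p q => Φ (Matrix.of fun b d => M (p.1, b) (q.1, d)) p.2 q.2

/-- Choi matrix Σ_{k,l} E_{kl} ⊗ Λ(E_{kl}) of a linear map Λ on M₂(ℂ). -/
def Choi (Λ : Matrix (Fin 2) (Fin 2) ℂ →ₗ[ℂ] Matrix (Fin 2) (Fin 2) ℂ) :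
    Matrix (Fin 2 × Fin 2) (Fin 2 × Fin 2) ℂ :=
  ∑ k : Fin 2, ∑ l : Fin 2,
    (Matrix.single k l (1 : ℂ)) ⊗ₖ Λ (Matrix.single k l (1 : ℂ))

/-- Sign value of a Boolean outcome: true ↦ +1, false ↦ −1. -/
def sgn (b : Bool) : ℝ := if b then 1 else -1

/-- Unsharp spin effect P^a_{n̂,λ} = (1/2)(I + λ a n̂·σ). -/
def Peff (n : Fin 3 → ℝ) (lam a : ℝ) : Matrix (Fin 2) (Fin 2) ℂ :=
  (2 : ℂ)⁻¹ • ((1 : Matrix (Fin 2) (Fin 2) ℂ)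
    + ((lam * a * n 0 : ℝ) : ℂ) • σx + ((lam * a * n 1 : ℝ) : ℂ) • σy
    + ((lam * a * n 2 : ℝ) : ℂ) • σz)

/-- Computational basis vector |ab⟩ of ℂ²⊗ℂ². -/
def ket (a b : Fin 2) : Fin 2 × Fin 2 → ℂ := fun p => if p = (a, b) then 1 else 0

/-- Bell vector |φ⁺⟩. -/
def phiP : Fin 2 × Fin 2 → ℂ := ((Real.sqrt 2 : ℝ) : ℂ)⁻¹ • (ket 0 0 + ket 1 1)
/-- Bell vector |φ⁻⟩. -/
def phiM : Fin 2 × Fin 2 → ℂ := ((Real.sqrt 2 : ℝ) : ℂ)⁻¹ • (ket 0 0 - ket 1 1)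
/-- Bell vector |ψ⁺⟩. -/
def psiP : Fin 2 × Fin 2 → ℂ := ((Real.sqrt 2 : ℝ) : ℂ)⁻¹ • (ket 0 1 + ket 1 0)
/-- Bell vector |ψ⁻⟩. -/
def psiM : Fin 2 × Fin 2 → ℂ := ((Real.sqrt 2 : ℝ) : ℂ)⁻¹ • (ket 0 1 - ket 1 0)

/-- The vector |ξ_{[i,j,k]}⟩ = (1/2)(|ψ⁻⟩ − i|φ⁻⟩ + 𝐢 j|φ⁺⟩ + k|ψ⁺⟩). -/
def xi (i j k : ℝ) : Fin 2 × Fin 2 → ℂ :=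
  (2 : ℂ)⁻¹ • (psiM - (i : ℂ) • phiM + (Complex.I * (j : ℂ)) • phiP + (k : ℂ) • psiP)

end

/-!
Π↑↑_{[i,j,k]} = (1/8) P_singlet + (3/8) ρ_n ⊗ ρ_n, where n = (i,j,k)/√3 is a unit vector, so that
ρ_n is a pure state; both summands are nonnegative multiples of Hermitian projections, hence
positive. The normalisation and the marginals are linear computations: since
Tr[(A ⊗ B)(ρ_m ⊗ ρ_m)] = Tr(Aρ_m) Tr(Bρ_m) and Tr(σ_a ρ_m) = m_a, the outcome probability of
[i,j,k] is a polynomial in the signs, and summing over two of them kills every term that involves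
them.
-/

lemma σx_mul_σx : σx * σx = 1 := by
  ext a b; fin_cases a <;> fin_cases b <;> simp [σx, mul_apply, Fin.sum_univ_two]
lemma σy_mul_σy : σy * σy = 1 := by
  ext a b; fin_cases a <;> fin_cases b <;> simp [σy, mul_apply, Fin.sum_univ_two]
lemma σz_mul_σz : σz * σz = 1 := by
  ext a b; fin_cases a <;> fin_cases b <;> simp [σz, mul_apply, Fin.sum_univ_two]
lemma σx_mul_σy : σx * σy = Complex.I • σz := by
  ext a b; fin_cases a <;> fin_cases b <;> simp [σx, σy, σz, mul_apply, Fin.sum_univ_two]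
lemma σy_mul_σx : σy * σx = -Complex.I • σz := by
  ext a b; fin_cases a <;> fin_cases b <;> simp [σx, σy, σz, mul_apply, Fin.sum_univ_two]
lemma σy_mul_σz : σy * σz = Complex.I • σx := by
  ext a b; fin_cases a <;> fin_cases b <;> simp [σx, σy, σz, mul_apply, Fin.sum_univ_two]
lemma σz_mul_σy : σz * σy = -Complex.I • σx := by
  ext a b; fin_cases a <;> fin_cases b <;> simp [σx, σy, σz, mul_apply, Fin.sum_univ_two]
lemma σz_mul_σx : σz * σx = Complex.I • σy := by
  ext a b; fin_cases a <;> fin_cases b <;> simp [σx, σy, σz, mul_apply, Fin.sum_univ_two]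
lemma σx_mul_σz : σx * σz = -Complex.I • σy := by
  ext a b; fin_cases a <;> fin_cases b <;> simp [σx, σy, σz, mul_apply, Fin.sum_univ_two]

lemma isHermitian_σx : σx.IsHermitian := by
  ext a b; fin_cases a <;> fin_cases b <;> simp [σx]
lemma isHermitian_σy : σy.IsHermitian := by
  ext a b; fin_cases a <;> fin_cases b <;> simp [σy]
lemma isHermitian_σz : σz.IsHermitian := by
  ext a b; fin_cases a <;> fin_cases b <;> simp [σz]

lemma trace_σx : σx.trace = 0 := by simp [σx, trace, Fin.sum_univ_two]
lemma trace_σy : σy.trace = 0 := by simp [σy, trace, Fin.sum_univ_two]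
lemma trace_σz : σz.trace = 0 := by simp [σz, trace, Fin.sum_univ_two]

lemma Matrix.PosSemidef.of_isHermitian_of_mul_self {n R : Type*} [Fintype n] [Ring R]
    [PartialOrder R] [StarRing R] [StarOrderedRing R] {P : Matrix n n R}
    (hP : P.IsHermitian) (hPP : P * P = P) : P.PosSemidef := by
  simpa [hP.eq, hPP] using posSemidef_conjTranspose_mul_self P

lemma trace_rho (m : Fin 3 → ℝ) : (rho m).trace = 1 := by
  simp [rho, trace_σx, trace_σy, trace_σz]

lemma trace_σx_mul_rho (m : Fin 3 → ℝ) : (σx * rho m).trace = m 0 := by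
  simp only [rho, Matrix.mul_smul, mul_add, Matrix.mul_one, σx_mul_σx, σx_mul_σy, σx_mul_σz,
    trace_smul, trace_add, trace_one, trace_σx, trace_σy, trace_σz, Fintype.card_fin, smul_zero]
  push_cast [smul_eq_mul]
  ring

lemma trace_σy_mul_rho (m : Fin 3 → ℝ) : (σy * rho m).trace = m 1 := by
  simp only [rho, Matrix.mul_smul, mul_add, Matrix.mul_one, σy_mul_σy, σy_mul_σx, σy_mul_σz,
    trace_smul, trace_add, trace_one, trace_σx, trace_σy, trace_σz, Fintype.card_fin, smul_zero]
  push_cast [smul_eq_mul]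
  ring

lemma trace_σz_mul_rho (m : Fin 3 → ℝ) : (σz * rho m).trace = m 2 := by
  simp only [rho, Matrix.mul_smul, mul_add, Matrix.mul_one, σz_mul_σz, σz_mul_σx, σz_mul_σy,
    trace_smul, trace_add, trace_one, trace_σx, trace_σy, trace_σz, Fintype.card_fin, smul_zero]
  push_cast [smul_eq_mul]
  ring

lemma isHermitian_rho (m : Fin 3 → ℝ) : (rho m).IsHermitian := by
  simp [rho, IsHermitian, conjTranspose_add, conjTranspose_smul, isHermitian_σx.eq,
    isHermitian_σy.eq, isHermitian_σz.eq]

lemma rho_mul_self {n : Fin 3 → ℝ} (hn : n 0 ^ 2 + n 1 ^ 2 + n 2 ^ 2 = 1) :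
    rho n * rho n = rho n := by
  have hn' : (n 0 : ℂ) ^ 2 + (n 1 : ℂ) ^ 2 + (n 2 : ℂ) ^ 2 = 1 := by exact_mod_cast hn
  simp only [rho, add_mul, mul_add, Matrix.smul_mul, Matrix.mul_smul, Matrix.one_mul,
    Matrix.mul_one, σx_mul_σx, σy_mul_σy, σz_mul_σz, σx_mul_σy, σy_mul_σx, σy_mul_σz, σz_mul_σy,
    σz_mul_σx, σx_mul_σz]
  match_scalars <;> first | ring1 | linear_combination (4⁻¹ : ℂ) * hn'

noncomputable def singlet : Matrix (Fin 2 × Fin 2) (Fin 2 × Fin 2) ℂ :=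
  (4 : ℂ)⁻¹ • (1 - σx ⊗ₖ σx - σy ⊗ₖ σy - σz ⊗ₖ σz)

lemma isHermitian_singlet : singlet.IsHermitian := by
  simp [singlet, IsHermitian, conjTranspose_sub, conjTranspose_smul, conjTranspose_kronecker,
    isHermitian_σx.eq, isHermitian_σy.eq, isHermitian_σz.eq]

lemma singlet_mul_self : singlet * singlet = singlet := by
  simp only [singlet, Matrix.smul_mul, Matrix.mul_smul, sub_mul, mul_sub, Matrix.one_mul,
    Matrix.mul_one, ← mul_kronecker_mul, σx_mul_σx, σy_mul_σy, σz_mul_σz, σx_mul_σy, σy_mul_σx,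
    σy_mul_σz, σz_mul_σy, σz_mul_σx, σx_mul_σz, one_kronecker_one, smul_kronecker, kronecker_smul]
  match_scalars <;> ring_nf <;> simp only [Complex.I_sq] <;> ring1

noncomputable def unitDiagonal (i j k : ℝ) : Fin 3 → ℝ :=
  ![Real.sqrt 3 / 3 * i, Real.sqrt 3 / 3 * j, Real.sqrt 3 / 3 * k]

lemma unitDiagonal_normSq {i j k : ℝ} (hi : i ^ 2 = 1) (hj : j ^ 2 = 1) (hk : k ^ 2 = 1) :
    unitDiagonal i j k 0 ^ 2 + unitDiagonal i j k 1 ^ 2 + unitDiagonal i j k 2 ^ 2 = 1 := by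
  simp only [unitDiagonal, Matrix.cons_val, mul_pow, div_pow, hi, hj, hk,
    Real.sq_sqrt (by norm_num : (0 : ℝ) ≤ 3)]
  norm_num

lemma piPar_eq_singlet_add_rho_kronecker {i j k : ℝ} (hi : i ^ 2 = 1) (hj : j ^ 2 = 1)
    (hk : k ^ 2 = 1) :
    PiPar i j k = (8⁻¹ : ℂ) • singlet
      + (3 / 8 : ℂ) • (rho (unitDiagonal i j k) ⊗ₖ rho (unitDiagonal i j k)) := by
  have h3 : ((Real.sqrt 3 : ℝ) : ℂ) ^ 2 = 3 := by
    rw [← Complex.ofReal_pow, Real.sq_sqrt (by norm_num : (0 : ℝ) ≤ 3)]; norm_num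
  have hi' : (i : ℂ) ^ 2 = 1 := by exact_mod_cast hi
  have hj' : (j : ℂ) ^ 2 = 1 := by exact_mod_cast hj
  have hk' : (k : ℂ) ^ 2 = 1 := by exact_mod_cast hk
  simp only [PiPar, singlet, rho, unitDiagonal, Matrix.cons_val, add_kronecker, kronecker_add,
    smul_kronecker, kronecker_smul, one_kronecker_one, smul_add, smul_sub, smul_smul]
  push_cast
  match_scalars <;> first | ring1 | (ring_nf; simp only [h3, hi', hj', hk']; ring1)

lemma piPar_posSemidef {i j k : ℝ} (hi : i ^ 2 = 1) (hj : j ^ 2 = 1) (hk : k ^ 2 = 1) :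
    (PiPar i j k).PosSemidef := by
  have hρ := PosSemidef.of_isHermitian_of_mul_self (isHermitian_rho _)
    (rho_mul_self (unitDiagonal_normSq hi hj hk))
  rw [piPar_eq_singlet_add_rho_kronecker hi hj hk]
  exact ((PosSemidef.of_isHermitian_of_mul_self isHermitian_singlet singlet_mul_self).smul
    (by positivity)).add ((hρ.kronecker hρ).smul (by positivity))

lemma trace_piPar_mul_rho_kronecker_rho (i j k : ℝ) (m : Fin 3 → ℝ) :
    (PiPar i j k * (rho m ⊗ₖ rho m)).trace =
      (((4 + 2 * Real.sqrt 3 * (i * m 0 + j * m 1 + k * m 2)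
        + 2 * (i * j * m 0 * m 1 + j * k * m 1 * m 2 + k * i * m 2 * m 0)) / 32 : ℝ) : ℂ) := by
  simp only [PiPar, add_mul, Matrix.smul_mul, Matrix.one_mul, ← mul_kronecker_mul, trace_add,
    trace_smul, trace_kronecker, trace_rho, trace_σx_mul_rho, trace_σy_mul_rho, trace_σz_mul_rho]
  push_cast
  ring

lemma sq_eq_one_of_mem_pm {i : ℝ} (hi : i ∈ pm) : i ^ 2 = 1 := by
  obtain rfl | rfl : i = 1 ∨ i = -1 := by simpa [pm] using hi
  all_goals norm_num

lemma sum_pm {M : Type*} [AddCommMonoid M] (f : ℝ → M) : ∑ x ∈ pm, f x = f 1 + f (-1) :=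
  Finset.sum_pair (by norm_num)

lemma sum_piPar : ∑ i ∈ pm, ∑ j ∈ pm, ∑ k ∈ pm, PiPar i j k = 1 := by
  simp only [sum_pm, PiPar]
  match_scalars <;> ring1

/-- the parallel-configuration POVM Π↑↑ of Carmeli et al.: each effect
is PSD, the effects sum to the identity, and the marginals on ρ_m ⊗ ρ_m give the
unsharp spin statistics with sharpness √3/2. -/
theorem piPar_povm_and_marginals :
    (∀ i ∈ pm, ∀ j ∈ pm, ∀ k ∈ pm, (PiPar i j k).PosSemidef) ∧
    (∑ i ∈ pm, ∑ j ∈ pm, ∑ k ∈ pm, PiPar i j k = 1) ∧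
    ∀ m : Fin 3 → ℝ, m 0 ^ 2 + m 1 ^ 2 + m 2 ^ 2 ≤ 1 →
      (∀ i ∈ pm, ∑ j ∈ pm, ∑ k ∈ pm, (PiPar i j k * (rho m ⊗ₖ rho m)).trace
          = ((1 / 2 * (1 + Real.sqrt 3 / 2 * i * m 0) : ℝ) : ℂ)) ∧
      (∀ j ∈ pm, ∑ i ∈ pm, ∑ k ∈ pm, (PiPar i j k * (rho m ⊗ₖ rho m)).trace
          = ((1 / 2 * (1 + Real.sqrt 3 / 2 * j * m 1) : ℝ) : ℂ)) ∧
      (∀ k ∈ pm, ∑ i ∈ pm, ∑ j ∈ pm, (PiPar i j k * (rho m ⊗ₖ rho m)).trace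
          = ((1 / 2 * (1 + Real.sqrt 3 / 2 * k * m 2) : ℝ) : ℂ)) := by
  refine ⟨fun i hi j hj k hk => piPar_posSemidef (sq_eq_one_of_mem_pm hi)
    (sq_eq_one_of_mem_pm hj) (sq_eq_one_of_mem_pm hk), sum_piPar, fun m _ => ⟨?_, ?_, ?_⟩⟩
  all_goals
    intro s _
    simp only [sum_pm, trace_piPar_mul_rho_kronecker_rho]
    push_cast
    ring
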